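/- Suppose φ : X → ℝ, μ and ν are measures on X, g : X → ℝ with g ≥ c > 0, ρ₀ is bounded above, t > ε > 0, and g dμ = e^{−tφ+ρ₀} dν with ν(X) = V. Then (1/V)∫_X φ dμ ≤ e^{sup ρ₀ − 1}/(c·ε). -/

import Mathlib

open MeasureTheory
open scoped ENNReal NNReal

theorem aux_ptwise (a ρ M t ε : ℝ) (hρ : ρ ≤ M) (hε : 0 < ε) (ht : ε < t) :
    ENNReal.ofReal a * ENNReal.ofReal (Real.exp (-t * a + ρ)) ≤
      ENNReal.ofReal (Real.exp (M - 1) / ε) := by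
  have ht0 : 0 < t := hε.trans ht
  rcases le_or_gt a 0 with ha | ha
  · rw [ENNReal.ofReal_of_nonpos ha, zero_mul]
    exact zero_le
  · rw [← ENNReal.ofReal_mul ha.le]
    apply ENNReal.ofReal_le_ofReal
    have h3 : t * a ≤ Real.exp (t * a) * Real.exp (-1) := by
      rw [← Real.exp_add]
      have := Real.add_one_le_exp (t * a - 1)
      calc t * a = t * a - 1 + 1 := by ring
        _ ≤ Real.exp (t * a - 1) := this
        _ = Real.exp (t * a + -1) := by ring_nf
    have hA : a ≤ Real.exp (t * a) * Real.exp (-1) / t := by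
      rw [le_div_iff₀ ht0]; nlinarith
    have hB : a * Real.exp (-(t * a)) ≤ Real.exp (-1) / t := by
      calc a * Real.exp (-(t * a))
          ≤ (Real.exp (t * a) * Real.exp (-1) / t) * Real.exp (-(t * a)) :=
            mul_le_mul_of_nonneg_right hA (Real.exp_pos _).le
        _ = Real.exp (-1) / t := by
            have h1 : Real.exp (t * a) * Real.exp (-(t * a)) = 1 := by
              rw [← Real.exp_add]; simp
            field_simp
            nlinarith [h1, Real.exp_pos (t*a), Real.exp_pos (-(t*a)), Real.exp_pos (-1:ℝ)]
    have hC : Real.exp (-1) / t ≤ Real.exp (-1) / ε :=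
      div_le_div_of_nonneg_left (Real.exp_pos _).le hε ht.le
    calc a * Real.exp (-t * a + ρ) = (a * Real.exp (-(t * a))) * Real.exp ρ := by
          rw [show -t * a + ρ = -(t * a) + ρ by ring, Real.exp_add]; ring
      _ ≤ (Real.exp (-1) / ε) * Real.exp M := by
          apply mul_le_mul (hB.trans hC) (Real.exp_le_exp.2 hρ) (Real.exp_pos _).le
          positivity
      _ = Real.exp (M - 1) / ε := by
          rw [Real.exp_sub, Real.exp_neg]
          field_simp [Real.exp_neg]

/-- Lemma `int-phi`: if `g·dμ = e^{−tφ+ρ₀}·dν` with `g ≥ c > 0`,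
`ρ₀` bounded above, `ν(X) = V > 0` and `t > ε > 0`, then
`(1/V)·∫ φ dμ ≤ e^{sup ρ₀ − 1}/(c·ε)`. -/
theorem stmt_11 {X : Type*} [MeasurableSpace X] [Nonempty X]
    (μ ν : Measure X) (V : ℝ) (hV : 0 < V)
    (hνtot : ν Set.univ = ENNReal.ofReal V)
    (φ g ρ₀ : X → ℝ) (c t ε : ℝ) (hc : 0 < c) (hε : 0 < ε) (ht : ε < t)
    (hφmeas : Measurable φ) (hgmeas : Measurable g) (hρmeas : Measurable ρ₀)
    (hglow : ∀ x, c ≤ g x)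
    (hρbdd : BddAbove (Set.range ρ₀))
    (hφint : Integrable φ μ)
    (hdens : ∀ s : Set X, MeasurableSet s →
      ∫ x in s, g x ∂μ = ∫ x in s, Real.exp (-t * φ x + ρ₀ x) ∂ν) :
    (1 / V) * ∫ x, φ x ∂μ ≤
      Real.exp (sSup (Set.range ρ₀) - 1) / (c * ε) := by
  haveI : IsFiniteMeasure ν := ⟨by rw [hνtot]; exact ENNReal.ofReal_lt_top⟩
  set M := sSup (Set.range ρ₀) with hMdef
  have hρle : ∀ x, ρ₀ x ≤ M := fun x => le_csSup hρbdd ⟨x, rfl⟩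
  have ht0 : 0 < t := hε.trans ht
  set E : X → ℝ≥0∞ := fun x => ENNReal.ofReal (Real.exp (-t * φ x + ρ₀ x)) with hEdef
  have hexpmeas : Measurable fun x => Real.exp (-t * φ x + ρ₀ x) :=
    ((hφmeas.const_mul (-t)).add hρmeas).exp
  have hEmeas : Measurable E := ENNReal.measurable_ofReal.comp hexpmeas
  -- key measure bound
  have key : ∀ s : ℝ, 0 < s →
      ENNReal.ofReal c * μ {x | s < φ x} ≤ ∫⁻ x in {x | s < φ x}, E x ∂ν := by
    intro s hs
    set A := {x | s < φ x} with hAdef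
    have hAmeas : MeasurableSet A := hφmeas measurableSet_Ioi
    have hAfin : μ A < ∞ := by
      refine lt_of_le_of_lt (measure_mono ?_) (hφint.measure_ge_lt_top hs)
      intro x hx; exact le_of_lt (show s < φ x from hx)
    set B : ℕ → Set X := fun n => A ∩ {x | g x ≤ (n : ℝ)} with hBdef
    have hBmeas : ∀ n, MeasurableSet (B n) := fun n =>
      hAmeas.inter (measurableSet_le hgmeas measurable_const)
    have hBsub : ∀ n, B n ⊆ A := fun n => Set.inter_subset_left
    have hBfin : ∀ n, μ (B n) < ∞ := fun n => lt_of_le_of_lt (measure_mono (hBsub n)) hAfin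
    have hexpint : IntegrableOn (fun x => Real.exp (-t * φ x + ρ₀ x)) A ν := by
      apply Integrable.mono' (integrable_const (Real.exp M)) hexpmeas.aestronglyMeasurable
      rw [ae_restrict_iff' hAmeas]
      refine ae_of_all _ fun x hx => ?_
      rw [Real.norm_eq_abs, abs_of_pos (Real.exp_pos _)]
      apply Real.exp_le_exp.2
      have hx' : s < φ x := hx
      nlinarith [hρle x]
    have step : ∀ n : ℕ, ENNReal.ofReal c * μ (B n) ≤ ∫⁻ x in A, E x ∂ν := by
      intro n
      haveI : IsFiniteMeasure (μ.restrict (B n)) :=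
        ⟨by rw [Measure.restrict_apply_univ]; exact hBfin n⟩
      have hgint : IntegrableOn g (B n) μ := by
        apply Integrable.mono' (integrable_const (n : ℝ)) hgmeas.aestronglyMeasurable
        rw [ae_restrict_iff' (hBmeas n)]
        refine ae_of_all _ fun x hx => ?_
        rw [Real.norm_eq_abs, abs_of_pos (hc.trans_le (hglow x))]
        exact hx.2
      calc ENNReal.ofReal c * μ (B n)
          = ∫⁻ _ in B n, ENNReal.ofReal c ∂μ := (setLIntegral_const _ _).symm
        _ ≤ ∫⁻ x in B n, ENNReal.ofReal (g x) ∂μ :=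
            lintegral_mono fun x => ENNReal.ofReal_le_ofReal (hglow x)
        _ = ENNReal.ofReal (∫ x in B n, g x ∂μ) :=
            (ofReal_integral_eq_lintegral_ofReal hgint
              (ae_of_all _ fun x => (hc.trans_le (hglow x)).le)).symm
        _ = ENNReal.ofReal (∫ x in B n, Real.exp (-t * φ x + ρ₀ x) ∂ν) := by
            rw [hdens (B n) (hBmeas n)]
        _ = ∫⁻ x in B n, E x ∂ν :=
            ofReal_integral_eq_lintegral_ofReal (hexpint.mono_set (hBsub n))
              (ae_of_all _ fun x => (Real.exp_pos _).le)
        _ ≤ ∫⁻ x in A, E x ∂ν := lintegral_mono_set (hBsub n)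
    have hAeq : A = ⋃ n, B n := by
      ext x
      simp only [Set.mem_iUnion, hBdef, Set.mem_inter_iff, Set.mem_setOf_eq]
      constructor
      · intro hx; obtain ⟨n, hn⟩ := exists_nat_ge (g x); exact ⟨n, hx, hn⟩
      · rintro ⟨n, hx, -⟩; exact hx
    have hmono : Monotone B := by
      intro m n hmn x hx
      exact ⟨hx.1, le_trans (show g x ≤ (m:ℝ) from hx.2) (Nat.cast_le.2 hmn)⟩
    have hsup : μ A = ⨆ n, μ (B n) := by
      rw [hAeq]; exact hmono.directed_le.measure_iUnion
    rw [hsup, ENNReal.mul_iSup]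
    exact iSup_le step
  -- layer cake
  set ψ : X → ℝ := fun x => max (φ x) 0 with hψdef
  have hψmeas : Measurable ψ := hφmeas.max measurable_const
  have hofeq : ∀ x, ENNReal.ofReal (ψ x) = ENNReal.ofReal (φ x) := fun x => by
    rcases le_total (φ x) 0 with h | h
    · simp [hψdef, max_eq_right h, ENNReal.ofReal_of_nonpos h]
    · simp [hψdef, max_eq_left h]
  set L := ∫⁻ x, ENNReal.ofReal (φ x) ∂μ with hLdef
  have layer : L = ∫⁻ s in Set.Ioi (0:ℝ), μ {x | s < φ x} := by
    have h1 := lintegral_eq_lintegral_meas_lt μ (f := ψ)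
      (ae_of_all _ fun x => le_max_right _ _) hψmeas.aemeasurable
    have h2 : ∫⁻ x, ENNReal.ofReal (ψ x) ∂μ = L := lintegral_congr hofeq
    rw [← h2, h1]
    apply setLIntegral_congr_fun measurableSet_Ioi
    intro s hs
    dsimp only
    congr 1
    ext x
    simp only [Set.mem_setOf_eq, hψdef, lt_max_iff]
    exact or_iff_left (asymm hs)
  -- the main estimate
  set K : ℝ := Real.exp (M - 1) / ε with hKdef
  have hKpos : 0 < K := by positivity
  have main : ENNReal.ofReal c * L ≤ ENNReal.ofReal (K * V) := by
    rw [layer, ← lintegral_const_mul' _ _ ENNReal.ofReal_ne_top]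
    have hS : MeasurableSet {p : ℝ × X | p.1 < φ p.2} :=
      measurableSet_lt measurable_fst (hφmeas.comp measurable_snd)
    calc ∫⁻ s in Set.Ioi (0:ℝ), ENNReal.ofReal c * μ {x | s < φ x}
        ≤ ∫⁻ s in Set.Ioi (0:ℝ), ∫⁻ x in {x | s < φ x}, E x ∂ν := by
          apply lintegral_mono_ae
          rw [ae_restrict_iff' measurableSet_Ioi]
          exact ae_of_all _ fun s hs => key s hs
      _ = ∫⁻ s in Set.Ioi (0:ℝ), ∫⁻ x, ({x | s < φ x}).indicator E x ∂ν := by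
          refine lintegral_congr fun s => ?_
          exact (lintegral_indicator (s := {x | s < φ x}) (hφmeas measurableSet_Ioi) E).symm
      _ = ∫⁻ x, ∫⁻ s in Set.Ioi (0:ℝ), ({x' | s < φ x'}).indicator E x ∂volume ∂ν := by
          apply lintegral_lintegral_swap
          apply Measurable.aemeasurable
          have : (Function.uncurry fun s x => ({x' | s < φ x'}).indicator E x) =
              ({p : ℝ × X | p.1 < φ p.2}).indicator (fun p => E p.2) := by
            ext p
            simp [Function.uncurry, Set.indicator_apply]
          rw [this]
          exact (hEmeas.comp measurable_snd).indicator hS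
      _ = ∫⁻ x, E x * ENNReal.ofReal (φ x) ∂ν := by
          refine lintegral_congr fun x => ?_
          have heq : ∀ s : ℝ, ({x' | s < φ x'}).indicator E x =
              (Set.Iio (φ x)).indicator (fun _ => E x) s := by
            intro s; simp [Set.indicator_apply, Set.mem_Iio]
          calc ∫⁻ s in Set.Ioi (0:ℝ), ({x' | s < φ x'}).indicator E x ∂volume
              = ∫⁻ s in Set.Ioi (0:ℝ), (Set.Iio (φ x)).indicator (fun _ => E x) s ∂volume :=
                lintegral_congr heq
            _ = ∫⁻ _ in Set.Iio (φ x), E x ∂(volume.restrict (Set.Ioi 0)) :=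
                lintegral_indicator measurableSet_Iio _
            _ = E x * (volume.restrict (Set.Ioi 0)) (Set.Iio (φ x)) := setLIntegral_const _ _
            _ = E x * ENNReal.ofReal (φ x) := by
                rw [Measure.restrict_apply measurableSet_Iio, Set.Iio_inter_Ioi,
                  Real.volume_Ioo, sub_zero]
      _ ≤ ∫⁻ _, ENNReal.ofReal K ∂ν := by
          refine lintegral_mono fun x => ?_
          rw [mul_comm]
          exact aux_ptwise (φ x) (ρ₀ x) M t ε (hρle x) hε ht
      _ = ENNReal.ofReal (K * V) := by
          rw [lintegral_const, hνtot, ← ENNReal.ofReal_mul hKpos.le]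
  -- convert to reals
  have hLne : L ≠ ∞ := by
    intro h
    rw [h, ENNReal.mul_top (by simpa [ENNReal.ofReal_eq_zero] using hc)] at main
    exact ENNReal.ofReal_ne_top (top_le_iff.1 main)
  have hreal : c * L.toReal ≤ K * V := by
    have h := ENNReal.toReal_mono ENNReal.ofReal_ne_top main
    rwa [ENNReal.toReal_mul, ENNReal.toReal_ofReal hc.le,
      ENNReal.toReal_ofReal (by positivity)] at h
  have hint : ∫ x, φ x ∂μ ≤ L.toReal := by
    have h1 : ∫ x, φ x ∂μ ≤ ∫ x, ψ x ∂μ :=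
      integral_mono hφint hφint.pos_part (fun x => le_max_left _ _)
    have h2 : ∫ x, ψ x ∂μ = (∫⁻ x, ENNReal.ofReal (ψ x) ∂μ).toReal :=
      integral_eq_lintegral_of_nonneg_ae (ae_of_all _ fun x => le_max_right _ _)
        hψmeas.aestronglyMeasurable
    rw [h2, lintegral_congr hofeq] at h1
    exact h1
  have hfinal : ∫ x, φ x ∂μ ≤ (K * V) / c :=
    hint.trans ((le_div_iff₀ hc).2 (by linarith [hreal]))
  rw [one_div, inv_mul_le_iff₀ hV]
  calc ∫ x, φ x ∂μ ≤ (K * V) / c := hfinal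
    _ = V * (Real.exp (M - 1) / (c * ε)) := by
        rw [hKdef]; field_simp
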